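/- Hypercomplex Cauchy–Schwarz inequality: for any two multivectors M, N in a Clifford algebra Cl(p,q), |Sc(M·N)| ≤ |M|·|N|, where |M|² = Sc(M·M̃) and ˜ is the principal involution. -/

import Mathlib

open Finset

/-- Sign of the basis vectors of `Cl(p,q)`: `e_k² = +1` for `k < p`, `-1` otherwise. -/
def clSig (p q : ℕ) : Fin (p + q) → ℝ := fun k => if (k : ℕ) < p then 1 else -1

/-- Sign produced when multiplying the basis blades `e_A` and `e_B` of a Clifford
algebra with diagonal quadratic form of signs `ε`: a factor `-1` for each
transposition needed to sort the product, and a factor `ε k` for each common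
basis vector `e_k` squared away. -/
def csign {n : ℕ} (ε : Fin n → ℝ) (A B : Finset (Fin n)) : ℝ :=
  (-1 : ℝ) ^ (((A ×ˢ B).filter (fun ab => ab.2 < ab.1)).card) * ∏ k ∈ A ∩ B, ε k

/-- The geometric (Clifford) product on `Cl(p,q)`, represented as real
coefficient functions on the `2ⁿ` basis blades: `e_A e_B = csign ε A B • e_{A Δ B}`. -/
noncomputable def clMul {n : ℕ} (ε : Fin n → ℝ) (M N : Finset (Fin n) → ℝ) :
    Finset (Fin n) → ℝ := fun C =>
  ∑ A : Finset (Fin n), ∑ B : Finset (Fin n),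
    if symmDiff A B = C then csign ε A B * M A * N B else 0

/-- The basis blade `e_A` of `Cl(p,q)`. -/
def blade {n : ℕ} (A : Finset (Fin n)) : Finset (Fin n) → ℝ :=
  fun B => if B = A then 1 else 0

/-- The principal involution of `Cl(p,q)`: `e_k ↦ ε_k e_k` on each generating
vector, reversing the order of products; on a blade of grade `r` it acts as
multiplication by `(-1)^(r(r-1)/2) ∏_{k∈A} ε_k`. -/
def clConj {n : ℕ} (ε : Fin n → ℝ) (M : Finset (Fin n) → ℝ) :
    Finset (Fin n) → ℝ := fun A =>
  ((-1 : ℝ) ^ (A.card * (A.card - 1) / 2) * ∏ k ∈ A, ε k) * M A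

/-- The scalar (grade-0) part of a multivector. -/
def clSc {n : ℕ} (M : Finset (Fin n) → ℝ) : ℝ := M ∅

/-!
The scalar part of `e_A e_B` vanishes unless `A = B`, so `Sc(MN) = Σ_A s_A M_A N_A` with
`s_A = csign ε A A = ±1`. The principal involution multiplies `e_A` by exactly `s_A`, so
`Sc(M M̃) = Σ_A s_A² M_A² = Σ_A M_A²`, and the theorem is the Cauchy–Schwarz inequality for
the coefficient vectors `(|M_A|)` and `(|N_A|)`.
-/

theorem Finset.card_product_filter_snd_lt {α : Type*} [LinearOrder α] (s : Finset α) :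
    #{x ∈ s ×ˢ s | x.2 < x.1} = (#s).choose 2 := by
  rw [← card_product_filter_lt]
  exact card_equiv (Equiv.prodComm α α) (by simp [and_comm])

section

variable {n : ℕ}

theorem csign_self (ε : Fin n → ℝ) (A : Finset (Fin n)) :
    csign ε A A = (-1) ^ (#A * (#A - 1) / 2) * ∏ k ∈ A, ε k := by
  rw [csign, card_product_filter_snd_lt, Nat.choose_two_right, inter_self]

theorem csign_self_sq {ε : Fin n → ℝ} (hε : ∀ k, ε k ^ 2 = 1) (A : Finset (Fin n)) :
    csign ε A A ^ 2 = 1 := by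
  rw [csign_self, mul_pow, ← pow_mul, pow_mul', neg_one_sq, one_pow, one_mul, ← prod_pow]
  exact prod_eq_one fun k _ => hε k

theorem clSc_clMul (ε : Fin n → ℝ) (M N : Finset (Fin n) → ℝ) :
    clSc (clMul ε M N) = ∑ A, csign ε A A * M A * N A := by
  unfold clSc clMul
  refine sum_congr rfl fun A _ => ?_
  simp only [← bot_eq_empty, symmDiff_eq_bot, sum_ite_eq, mem_univ, if_true]

theorem clSc_clMul_clConj {ε : Fin n → ℝ} (hε : ∀ k, ε k ^ 2 = 1) (M : Finset (Fin n) → ℝ) :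
    clSc (clMul ε M (clConj ε M)) = ∑ A, M A ^ 2 := by
  refine (clSc_clMul ε M _).trans (sum_congr rfl fun A _ => ?_)
  rw [clConj, ← csign_self]
  linear_combination M A ^ 2 * csign_self_sq hε A

theorem abs_clSc_clMul_le {ε : Fin n → ℝ} (hε : ∀ k, ε k ^ 2 = 1) (M N : Finset (Fin n) → ℝ) :
    |clSc (clMul ε M N)| ≤
      √(clSc (clMul ε M (clConj ε M))) * √(clSc (clMul ε N (clConj ε N))) := by
  have hs (A : Finset (Fin n)) : |csign ε A A| = 1 :=
    (abs_pow_eq_one _ two_ne_zero).1 (by rw [csign_self_sq hε, abs_one])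
  rw [clSc_clMul, clSc_clMul_clConj hε, clSc_clMul_clConj hε]
  calc |∑ A, csign ε A A * M A * N A| ≤ ∑ A, |M A| * |N A| :=
        (abs_sum_le_sum_abs _ _).trans_eq <| sum_congr rfl fun A _ => by
          rw [abs_mul, abs_mul, hs, one_mul]
    _ ≤ √(∑ A, |M A| ^ 2) * √(∑ A, |N A| ^ 2) := Real.sum_mul_le_sqrt_mul_sqrt _ _ _
    _ = √(∑ A, M A ^ 2) * √(∑ A, N A ^ 2) := by simp only [sq_abs]

end

theorem clSig_sq (p q : ℕ) (k : Fin (p + q)) : clSig p q k ^ 2 = 1 := by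
  unfold clSig; split_ifs <;> norm_num

/-- Hypercomplex Cauchy–Schwarz inequality: `|Sc(MN)| ≤ |M| |N|`, where
`|M| = √(Sc(M M̃))`. -/
theorem hypercomplex_cauchy_schwarz (p q : ℕ) (M N : Finset (Fin (p + q)) → ℝ) :
    |clSc (clMul (clSig p q) M N)| ≤
      Real.sqrt (clSc (clMul (clSig p q) M (clConj (clSig p q) M))) *
      Real.sqrt (clSc (clMul (clSig p q) N (clConj (clSig p q) N))) :=
  abs_clSc_clMul_le (clSig_sq p q) M N
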